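/- Let S be a finite planar point set in general position with maximum Delaunay depth f, and let L be the number of nonempty Delaunay levels Lev_j(S) (sets of plane points of relative depth j). Then L equals f or f + 1. -/

import Mathlib

open Metric Set

noncomputable section

abbrev Pt : Type := EuclideanSpace ℝ (Fin 2)

def pt (a b : ℝ) : Pt := WithLp.toLp 2 ![a, b]

/-- General position: no 3 collinear, no 4 cocircular. -/
def GenPos (S : Set Pt) : Prop :=
  (∀ T ⊆ S, T.ncard = 3 → ¬ Collinear ℝ T) ∧
  (∀ T ⊆ S, T.ncard = 4 → ¬ ∃ (c : Pt) (r : ℝ), ∀ p ∈ T, dist p c = r)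

/-- An empty circle through `p` and `q` witnessing Delaunay adjacency. -/
def EmptyCircle (S : Set Pt) (p q : Pt) : Prop :=
  ∃ (c : Pt) (r : ℝ), dist p c = r ∧ dist q c = r ∧
    ∀ s ∈ S, s ≠ p → s ≠ q → r < dist s c

/-- The Delaunay triangulation of `S` viewed as a graph on the plane
(vertices outside `S` are isolated). -/
def DelaunayGraph (S : Set Pt) : SimpleGraph Pt where
  Adj p q := p ≠ q ∧ p ∈ S ∧ q ∈ S ∧ EmptyCircle S p q
  symm := ⟨by
    rintro p q ⟨hne, hp, hq, c, r, h1, h2, h3⟩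
    exact ⟨hne.symm, hq, hp, c, r, h2, h1, fun s hs h1' h2' => h3 s hs h2' h1'⟩⟩
  loopless := ⟨fun p h => h.1 rfl⟩

/-- `p` is a vertex of the convex hull of `S`. -/
def HullVertex (S : Set Pt) (p : Pt) : Prop :=
  p ∈ S ∧ p ∉ convexHull ℝ (S \ {p})

/-- Delaunay depth of a point of `S`: one plus the graph distance in the
Delaunay triangulation to the set of convex-hull vertices. -/
def delaunayDepth (S : Set Pt) (p : Pt) : ℕ :=
  1 + sInf {d : ℕ | ∃ h : Pt, HullVertex S h ∧ (DelaunayGraph S).dist p h = d}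

/-- Delaunay depth of a query point `p` relative to `S`: its depth in `S ∪ {p}`. -/
def relDepth (S : Set Pt) (p : Pt) : ℕ := delaunayDepth (insert p S) p

/-- The segment corresponding to an (unordered) edge. -/
def edgeSeg (e : Sym2 Pt) : Set Pt :=
  Sym2.lift ⟨fun a b => segment ℝ a b, fun a b => segment_symm ℝ a b⟩ e

/-- The closed polygonal curve drawn by a closed walk of the graph. -/
def walkCurve {G : SimpleGraph Pt} {p : Pt} (w : G.Walk p p) : Set Pt :=
  ⋃ e ∈ w.edges, edgeSeg e

/-- `x` lies in the bounded open region enclosed by the curve. -/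
def InsideCurve (curve : Set Pt) (x : Pt) : Prop :=
  x ∉ curve ∧ Bornology.IsBounded (connectedComponentIn curveᶜ x)

/-! Every level `1, …, f` is attained by points of `S` itself: along a shortest Delaunay path from
a deepest point to the hull the depth drops by at most one per edge. No query point is deeper than
`f + 1`: a point outside the hull is a hull vertex of `S ∪ {x}`, and a point `x` inside the hull is
a Delaunay neighbour of its nearest point `q` of `S`. Walking from `q` to the hull along Delaunay
edges of `S`, every edge destroyed by inserting `x` ends at a new Delaunay neighbour of `x`, so `x`
reaches the hull within `depth q` steps. The set of levels thus lies between `{1, …, f}` and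
`{1, …, f + 1}`. -/

open EuclideanGeometry Filter Topology

section CirclePower

variable {P : Type*} [PseudoMetricSpace P]

/-- The power of `s` with respect to the circle centred at `c` passing through `a`. -/
def circlePower (c a s : P) : ℝ := dist s c ^ 2 - dist a c ^ 2

lemma circlePower_pos_iff {c a s : P} : 0 < circlePower c a s ↔ dist a c < dist s c := by
  rw [circlePower, sub_pos, sq_lt_sq₀ dist_nonneg dist_nonneg]

lemma circlePower_eq_zero_iff {c a s : P} : circlePower c a s = 0 ↔ dist s c = dist a c := by
  rw [circlePower, sub_eq_zero, sq_eq_sq₀ dist_nonneg dist_nonneg]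

lemma circlePower_self_center (b s : P) : circlePower b b s = dist s b ^ 2 := by
  simp [circlePower]

lemma circlePower_eq_of_circlePower_eq_zero {c a b : P} (h : circlePower c a b = 0) :
    circlePower c b = circlePower c a := by
  ext s
  rw [circlePower_eq_zero_iff] at h
  simp only [circlePower, h]

variable {V : Type*} [NormedAddCommGroup V] [InnerProductSpace ℝ V]

local notation "⟪" x ", " y "⟫" => @inner ℝ V _ x y

lemma circlePower_add (c u a s : V) :
    circlePower (c + u) a s = circlePower c a s - 2 * ⟪s - a, u⟫ := by
  have hsa : ⟪s - a, u⟫ = ⟪s - c, u⟫ - ⟪a - c, u⟫ := by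
    rw [← inner_sub_left, sub_sub_sub_cancel_right]
  simp only [circlePower, dist_eq_norm, sub_add_eq_sub_sub, norm_sub_sq_real, hsa]
  ring

/-- The new centre is the image of `c` under a homothety centred at `b`, chosen so that the shrunk
circle passes through `x`. -/
lemma exists_circlePower_eq_zero_of_neg {c b x : V} (hxb : x ≠ b) (hx : circlePower c b x < 0) :
    ∃ c', circlePower c' b x = 0 ∧
      ∀ s, s ≠ b → 0 ≤ circlePower c b s → 0 < circlePower c' b s := by
  have hmix : ∀ μ : ℝ, ∀ s, circlePower (b + μ • (c - b)) b s =
      (1 - μ) * dist s b ^ 2 + μ * circlePower c b s := by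
    intro μ s
    have hc := circlePower_add b (c - b) b s
    rw [add_sub_cancel, circlePower_self_center] at hc
    rw [circlePower_add, circlePower_self_center, inner_smul_right, hc]
    ring
  have hdx : 0 < dist x b ^ 2 := by positivity [dist_pos.2 hxb]
  set μ := dist x b ^ 2 / (dist x b ^ 2 - circlePower c b x)
  have hμ0 : 0 ≤ μ := div_nonneg hdx.le (by linarith)
  have hμ1 : μ < 1 := (div_lt_one (by linarith)).2 (by linarith)
  refine ⟨b + μ • (c - b), ?_, fun s hsb hs => ?_⟩
  · have hne : dist x b ^ 2 - circlePower c b x ≠ 0 := by linarith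
    rw [hmix]
    simp only [μ]
    field_simp
    ring
  · rw [hmix]
    have : 0 < dist s b ^ 2 := by positivity [dist_pos.2 hsb]
    nlinarith

/-- Three distinct points on a circle are not collinear; `w` is the component of `x - a`
orthogonal to the chord. -/
lemma exists_inner_eq_zero_inner_pos {a b x c : V} (hab : a ≠ b) (hxa : x ≠ a) (hxb : x ≠ b)
    (hb : dist b c = dist a c) (hx : dist x c = dist a c) :
    ∃ w, ⟪b - a, w⟫ = 0 ∧ 0 < ⟪x - a, w⟫ := by
  set v := b - a
  have hv : v ≠ 0 := sub_ne_zero.2 hab.symm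
  set β := ⟪x - a, v⟫ / ‖v‖ ^ 2
  set w := x - a - β • v
  have hvw : ⟪v, w⟫ = 0 := by
    simp only [w, inner_sub_right, inner_smul_right, real_inner_self_eq_norm_sq, β,
      real_inner_comm v]
    field_simp
    ring
  have hw : w ≠ 0 := by
    intro hw
    have hline : x ∈ line[ℝ, a, b] := by
      rw [show x = AffineMap.lineMap a b β by
        rw [AffineMap.lineMap_apply_module']; linear_combination (norm := module) hw]
      exact AffineMap.lineMap_mem_affineSpan_pair _ _ _
    have hcos : Cospherical ({x, a, b} : Set V) :=
      ⟨c, dist a c, by simp [hb, hx]⟩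
    exact affineIndependent_iff_not_collinear_set.1 (hcos.affineIndependent_of_ne hxa hxb hab)
      (collinear_insert_of_mem_affineSpan_pair hline)
  refine ⟨w, hvw, ?_⟩
  have : ⟪x - a, w⟫ = ⟪w, w⟫ := by
    rw [show x - a = w + β • v by simp [w], inner_add_left, inner_smul_left, hvw]
    simp
  rw [this, real_inner_self_eq_norm_sq]
  positivity

/-- Move the centre by a small positive multiple of `w`; the finitely many strict inequalities
survive. -/
lemma exists_circlePower_neg_of_inner_pos {S : Set V} (hS : S.Finite) {a b c x w : V}
    (hbw : ⟪b - a, w⟫ = 0) (hxw : 0 < ⟪x - a, w⟫) (hb : circlePower c a b = 0)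
    (hx : circlePower c a x ≤ 0) (hpos : ∀ s ∈ S, s ≠ a → s ≠ b → 0 < circlePower c a s) :
    ∃ c', circlePower c' a b = 0 ∧ circlePower c' a x < 0 ∧
      ∀ s ∈ S, s ≠ a → s ≠ b → 0 < circlePower c' a s := by
  have hnear : ∀ᶠ ε in 𝓝 (0 : ℝ), ∀ s ∈ {s ∈ S | s ≠ a ∧ s ≠ b},
      0 < circlePower c a s - 2 * ⟪s - a, ε • w⟫ := by
    rw [eventually_all_finite (hS.subset (sep_subset _ _))]
    rintro s ⟨hs, hsa, hsb⟩
    have hcont : Continuous fun ε : ℝ => circlePower c a s - 2 * ⟪s - a, ε • w⟫ := by fun_prop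
    exact (hcont.tendsto' 0 _ (by simp)).eventually_const_lt (hpos s hs hsa hsb)
  obtain ⟨ε, hε, hεpos⟩ := ((hnear.filter_mono nhdsWithin_le_nhds).and
    (self_mem_nhdsWithin : ∀ᶠ ε in 𝓝[>] (0 : ℝ), 0 < ε)).exists
  refine ⟨c + ε • w, ?_, ?_, fun s hs hsa hsb => ?_⟩
  · rw [circlePower_add, hb, inner_smul_right, hbw]
    ring
  · rw [circlePower_add, inner_smul_right]
    nlinarith
  · rw [circlePower_add]
    exact hε s ⟨hs, hsa, hsb⟩

end CirclePower

lemma emptyCircle_iff {S : Set Pt} {p q : Pt} :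
    EmptyCircle S p q ↔
      ∃ c, circlePower c p q = 0 ∧ ∀ s ∈ S, s ≠ p → s ≠ q → 0 < circlePower c p s := by
  simp only [EmptyCircle, circlePower_eq_zero_iff, circlePower_pos_iff]
  constructor
  · rintro ⟨c, r, rfl, hq, hS⟩
    exact ⟨c, hq, hS⟩
  · rintro ⟨c, hq, hS⟩
    exact ⟨c, _, rfl, hq, hS⟩

/-- The witness is the circle with diameter `ab`, by Apollonius' theorem. -/
lemma emptyCircle_of_forall_le_dist {S : Set Pt} {a b : Pt}
    (h : ∀ s ∈ S, s ≠ a → s ≠ b → dist a b ≤ dist s a ∨ dist a b ≤ dist s b) :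
    EmptyCircle S a b := by
  refine ⟨midpoint ℝ a b, dist a b / 2, by simp [dist_left_midpoint, div_eq_inv_mul],
    by simp [dist_right_midpoint, div_eq_inv_mul],
    fun s hs hsa hsb => ?_⟩
  by_contra! hle
  have hapollonius := dist_sq_add_dist_sq_eq_two_mul_dist_midpoint_sq_add_half_dist_sq s a b
  have hsa' := dist_pos.2 hsa
  have hsb' := dist_pos.2 hsb
  have hm := dist_nonneg (x := s) (y := midpoint ℝ a b)
  rcases h s hs hsa hsb with h' | h' <;> nlinarith

lemma mem_of_delaunayGraph_reachable {S : Set Pt} {p v : Pt} (hp : p ∈ S)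
    (h : (DelaunayGraph S).Reachable p v) : v ∈ S := by
  obtain ⟨w⟩ := h
  induction w with
  | nil => exact hp
  | cons hadj _ ih => exact ih hadj.2.2.1

/-- A closest pair across a cut spans an empty diametral circle, hence a Delaunay edge. -/
lemma delaunayGraph_reachable {S : Set Pt} (hfin : S.Finite) {a b : Pt} (ha : a ∈ S)
    (hb : b ∈ S) : (DelaunayGraph S).Reachable a b := by
  by_contra hab
  set A := {z ∈ S | (DelaunayGraph S).Reachable a z}
  obtain ⟨⟨a₀, b₀⟩, ⟨⟨ha₀S, ha₀⟩, hb₀S, hb₀⟩, hmin⟩ := Set.exists_min_image (A ×ˢ (S \ A))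
    (fun pq => dist pq.1 pq.2) ((hfin.subset (sep_subset _ _)).prod (hfin.subset sdiff_subset))
    ⟨(a, b), ⟨ha, .refl a⟩, hb, fun h => hab h.2⟩
  have hne : a₀ ≠ b₀ := by
    rintro rfl
    exact hb₀ ⟨hb₀S, ha₀⟩
  refine hb₀ ⟨hb₀S, ha₀.trans (SimpleGraph.Adj.reachable
    ⟨hne, ha₀S, hb₀S, emptyCircle_of_forall_le_dist fun s hs _ _ => ?_⟩)⟩
  by_cases hsA : (DelaunayGraph S).Reachable a s
  · exact .inr (hmin (s, b₀) ⟨⟨hs, hsA⟩, hb₀S, hb₀⟩)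
  · exact .inl (dist_comm a₀ s ▸ hmin (a₀, s) ⟨⟨ha₀S, ha₀⟩, hs, fun h => hsA h.2⟩)

lemma exists_delaunayGraph_insert_adj {S : Set Pt} (hfin : S.Finite) (hne : S.Nonempty)
    {x : Pt} (hxS : x ∉ S) : ∃ q ∈ S, (DelaunayGraph (insert x S)).Adj x q := by
  obtain ⟨q, hq, hmin⟩ := Set.exists_min_image S (dist x) hfin hne
  refine ⟨q, hq, (ne_of_mem_of_not_mem hq hxS).symm, mem_insert x S, .inr hq,
    emptyCircle_of_forall_le_dist ?_⟩
  rintro s (rfl | hs) hsx _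
  · exact absurd rfl hsx
  · exact .inl (dist_comm s x ▸ hmin s hs)

/-- If the empty circle of `vy` does not stay empty, perturb it until `x` is strictly inside, then
shrink it towards `y` until it passes through `x`. -/
lemma delaunayGraph_insert_adj_or_adj {S : Set Pt} (hfin : S.Finite) {x v y : Pt} (hxS : x ∉ S)
    (hadj : (DelaunayGraph S).Adj v y) :
    (DelaunayGraph (insert x S)).Adj v y ∨ (DelaunayGraph (insert x S)).Adj x y := by
  obtain ⟨hvy, hv, hy, hec⟩ := hadj
  obtain ⟨c, hcy, hcS⟩ := emptyCircle_iff.1 hec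
  by_cases hxc : 0 < circlePower c v x
  · refine .inl ⟨hvy, .inr hv, .inr hy, emptyCircle_iff.2 ⟨c, hcy, ?_⟩⟩
    rintro s (rfl | hs) hsv hsy
    exacts [hxc, hcS s hs hsv hsy]
  have hxv : x ≠ v := (ne_of_mem_of_not_mem hv hxS).symm
  have hxy : x ≠ y := (ne_of_mem_of_not_mem hy hxS).symm
  obtain ⟨c', hc'y, hc'x, hc'S⟩ : ∃ c', circlePower c' v y = 0 ∧ circlePower c' v x < 0 ∧
      ∀ s ∈ S, s ≠ v → s ≠ y → 0 < circlePower c' v s := by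
    rcases (not_lt.1 hxc).lt_or_eq with hlt | heq
    · exact ⟨c, hcy, hlt, hcS⟩
    · obtain ⟨w, hw, hxw⟩ := exists_inner_eq_zero_inner_pos hvy hxv hxy
        (circlePower_eq_zero_iff.1 hcy) (circlePower_eq_zero_iff.1 heq)
      exact exists_circlePower_neg_of_inner_pos hfin hw hxw hcy heq.le hcS
  rw [← circlePower_eq_of_circlePower_eq_zero hc'y] at hc'x hc'S
  obtain ⟨c'', hc''x, hc''S⟩ := exists_circlePower_eq_zero_of_neg hxy hc'x
  refine .inr ⟨hxy, mem_insert x S, .inr hy, emptyCircle_iff.2 ⟨c'', ?_, ?_⟩⟩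
  · rw [circlePower_eq_zero_iff, ← circlePower_eq_zero_iff.1 hc''x]
  rw [circlePower_eq_of_circlePower_eq_zero hc''x]
  rintro s (rfl | hs) hsx hsy
  · exact absurd rfl hsx
  refine hc''S s hsy ?_
  rcases eq_or_ne s v with rfl | hsv
  · rw [circlePower_eq_of_circlePower_eq_zero hc'y]
    simp [circlePower]
  · exact (hc'S s hs hsv hsy).le

lemma mem_extremePoints_convexHull_insert {E : Type*} [AddCommGroup E] [Module ℝ E] {T : Set E}
    {h : E} (hh : h ∉ convexHull ℝ T) : h ∈ (convexHull ℝ (insert h T)).extremePoints ℝ := by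
  rcases T.eq_empty_or_nonempty with rfl | hT
  · simp
  rw [convexHull_insert hT, mem_extremePoints_iff_left]
  obtain ⟨k, hk⟩ := hT
  refine ⟨mem_convexJoin.2 ⟨h, mem_singleton h, k, subset_convexHull ℝ T hk,
    left_mem_segment ℝ _ _⟩, ?_⟩
  rintro y hy z hz ⟨s, t, hs, ht, hst, hyz⟩
  obtain ⟨h₁, hh₁, k₁, hk₁, a₀, a, ha₀, ha, ha₀a, rfl⟩ := mem_convexJoin.1 hy
  obtain ⟨h₂, hh₂, k₂, hk₂, b₀, b, hb₀, hb, hb₀b, rfl⟩ := mem_convexJoin.1 hz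
  rw [mem_singleton_iff] at hh₁ hh₂
  subst h₁ h₂
  rcases ha.eq_or_lt with rfl | ha
  · rw [add_zero] at ha₀a
    simp [ha₀a]
  -- otherwise `h` is a proper convex combination of `k₁` and `k₂`
  set d := s * a + t * b
  have hd : 0 < d := by positivity
  have hcomb : d • h = (s * a) • k₁ + (t * b) • k₂ := by
    linear_combination (norm := module) -hyz + ha₀a • (s • h) + hb₀b • (t • h) + hst • h
  refine absurd ?_ hh
  have hh' : h = ((s * a) / d) • k₁ + ((t * b) / d) • k₂ := by
    rw [div_eq_inv_mul, div_eq_inv_mul, mul_smul d⁻¹ (s * a), mul_smul d⁻¹ (t * b), ← smul_add,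
      ← hcomb, inv_smul_smul₀ hd.ne']
  rw [hh']
  exact convex_iff_div.1 (convex_convexHull ℝ T) hk₁ hk₂ (by positivity) (by positivity) hd

lemma hullVertex_iff_mem_extremePoints {S : Set Pt} {p : Pt} :
    HullVertex S p ↔ p ∈ (convexHull ℝ S).extremePoints ℝ := by
  refine ⟨fun ⟨hp, hnot⟩ => ?_, fun hp => ⟨extremePoints_convexHull_subset hp, fun hmem => ?_⟩⟩
  · simpa [insert_eq_of_mem hp] using mem_extremePoints_convexHull_insert hnot
  · rw [(convex_convexHull ℝ S).mem_extremePoints_iff_mem_sdiff_convexHull_sdiff] at hp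
    exact hp.2 (convexHull_mono (sdiff_subset_sdiff_left (subset_convexHull ℝ S)) hmem)

lemma exists_hullVertex {S : Set Pt} (hfin : S.Finite) (hne : S.Nonempty) :
    ∃ p, HullVertex S p := by
  simp only [hullVertex_iff_mem_extremePoints]
  exact (hfin.isCompact_convexHull (𝕜 := ℝ)).extremePoints_nonempty
    (convexHull_nonempty_iff.2 hne)

lemma HullVertex.insert_of_mem_convexHull {S : Set Pt} {h x : Pt} (hh : HullVertex S h)
    (hx : x ∈ convexHull ℝ S) : HullVertex (insert x S) h := by
  rw [hullVertex_iff_mem_extremePoints] at hh ⊢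
  rwa [← (convexHull_mono (subset_insert x S)).antisymm
    (convexHull_min (insert_subset hx (subset_convexHull ℝ S)) (convex_convexHull ℝ S))]

lemma hullVertex_insert_self {S : Set Pt} {x : Pt} (hx : x ∉ convexHull ℝ S) :
    HullVertex (insert x S) x :=
  ⟨mem_insert x S, fun hmem => hx <| convexHull_mono sdiff_subset <| by
    rwa [insert_sdiff_of_mem _ (mem_singleton x)] at hmem⟩

lemma exists_walk_length_le_of_adj_or_adj {V : Type*} {G G' : SimpleGraph V} {x : V}
    (hG : ∀ u y, G.Adj u y → G'.Adj u y ∨ G'.Adj x y) {v h : V} (w : G.Walk v h)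
    (p : G'.Walk x v) : ∃ q : G'.Walk x h, q.length ≤ p.length + w.length := by
  induction w with
  | nil => exact ⟨p, le_add_right le_rfl⟩
  | cons hadj w ih =>
    rcases hG _ _ hadj with hadj' | hxy
    · obtain ⟨q, hq⟩ := ih (p.concat hadj')
      refine ⟨q, ?_⟩
      simp only [SimpleGraph.Walk.length_concat, SimpleGraph.Walk.length_cons] at hq ⊢
      omega
    · obtain ⟨q, hq⟩ := ih (.cons hxy .nil)
      refine ⟨q, ?_⟩
      simp only [SimpleGraph.Walk.length_cons, SimpleGraph.Walk.length_nil] at hq ⊢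
      omega

section Depth

variable {S : Set Pt}

lemma one_le_delaunayDepth (p : Pt) : 1 ≤ delaunayDepth S p :=
  Nat.le_add_right 1 _

lemma delaunayDepth_le {h : Pt} (hh : HullVertex S h) (p : Pt) :
    delaunayDepth S p ≤ 1 + (DelaunayGraph S).dist p h := by
  unfold delaunayDepth
  gcongr
  exact Nat.sInf_le ⟨h, hh, rfl⟩

lemma exists_hullVertex_delaunayDepth_eq (hS : ∃ h, HullVertex S h) (p : Pt) :
    ∃ h, HullVertex S h ∧ delaunayDepth S p = 1 + (DelaunayGraph S).dist p h := by
  obtain ⟨h₀, hh₀⟩ := hS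
  obtain ⟨h, hh, hd⟩ :=
    Nat.sInf_mem (s := {d | ∃ h, HullVertex S h ∧ (DelaunayGraph S).dist p h = d})
      ⟨_, h₀, hh₀, rfl⟩
  exact ⟨h, hh, by rw [delaunayDepth, ← hd]⟩

lemma relDepth_eq_delaunayDepth {x : Pt} (hx : x ∈ S) : relDepth S x = delaunayDepth S x := by
  rw [relDepth, insert_eq_of_mem hx]

/-- The witness is a vertex on a shortest path from `p` to the hull: depth changes by at most one
along an edge. -/
lemma exists_delaunayDepth_eq_of_le (hfin : S.Finite) {p : Pt} (hp : p ∈ S) {j : ℕ}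
    (hj₁ : 1 ≤ j) (hj : j ≤ delaunayDepth S p) : ∃ v ∈ S, delaunayDepth S v = j := by
  obtain ⟨h, hh, hph⟩ := exists_hullVertex_delaunayDepth_eq (exists_hullVertex hfin ⟨p, hp⟩) p
  obtain ⟨w, hw⟩ := (delaunayGraph_reachable hfin hp hh.1).exists_walk_length_eq_dist
  set k := delaunayDepth S p - j
  have hpv : (DelaunayGraph S).dist p (w.getVert k) ≤ k :=
    (SimpleGraph.dist_le _).trans ((w.take_length k).trans_le inf_le_left)
  have hvh : (DelaunayGraph S).dist (w.getVert k) h ≤ j - 1 :=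
    (SimpleGraph.dist_le _).trans (by rw [w.drop_length]; omega)
  have hreach : (DelaunayGraph S).Reachable p (w.getVert k) := (w.take k).reachable
  refine ⟨w.getVert k, mem_of_delaunayGraph_reachable hp hreach, le_antisymm
    ((delaunayDepth_le hh _).trans (by omega)) ?_⟩
  obtain ⟨h', hh', hvh'⟩ := exists_hullVertex_delaunayDepth_eq ⟨h, hh⟩ (w.getVert k)
  have := (delaunayDepth_le hh' p).trans (Nat.add_le_add_left (hreach.dist_triangle_left h') 1)
  omega

/-- A new point inside the hull is a Delaunay neighbour of its nearest point `q` of `S`, and a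
shortest path from `q` to a hull vertex can be followed from `x`. -/
lemma exists_relDepth_le_delaunayDepth_add_one (hfin : S.Finite) (hne : S.Nonempty) (x : Pt) :
    ∃ q ∈ S, relDepth S x ≤ delaunayDepth S q + 1 := by
  by_cases hxS : x ∈ S
  · exact ⟨x, hxS, (relDepth_eq_delaunayDepth hxS).trans_le (Nat.le_succ _)⟩
  obtain ⟨q₀, hq₀⟩ := hne
  by_cases hx : x ∈ convexHull ℝ S
  case neg =>
    refine ⟨q₀, hq₀, ?_⟩
    have := delaunayDepth_le (hullVertex_insert_self hx) x
    rw [SimpleGraph.dist_self] at this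
    exact this.trans (Nat.le_add_left _ _)
  obtain ⟨q, hq, hxq⟩ := exists_delaunayGraph_insert_adj hfin ⟨q₀, hq₀⟩ hxS
  obtain ⟨h, hh, hqh⟩ := exists_hullVertex_delaunayDepth_eq (exists_hullVertex hfin ⟨q, hq⟩) q
  obtain ⟨w, hw⟩ := (delaunayGraph_reachable hfin hq hh.1).exists_walk_length_eq_dist
  obtain ⟨w', hw'⟩ := exists_walk_length_le_of_adj_or_adj
    (fun _ _ => delaunayGraph_insert_adj_or_adj hfin hxS) w (.cons hxq .nil)
  refine ⟨q, hq, (delaunayDepth_le (hh.insert_of_mem_convexHull hx) x).trans ?_⟩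
  have := SimpleGraph.dist_le w'
  simp only [SimpleGraph.Walk.length_cons, SimpleGraph.Walk.length_nil] at hw'
  omega

end Depth

lemma ncard_eq_or_eq_add_one_of_Icc_subset {E : Set ℕ} {f : ℕ} (h₁ : Icc 1 f ⊆ E)
    (h₂ : E ⊆ Icc 1 (f + 1)) : E.ncard = f ∨ E.ncard = f + 1 := by
  by_cases hf : f + 1 ∈ E
  · right
    have : E = Icc 1 (f + 1) := by
      refine h₂.antisymm fun j ⟨hj₁, hj⟩ => ?_
      rcases Nat.lt_or_eq_of_le hj with hlt | rfl
      exacts [h₁ ⟨hj₁, by omega⟩, hf]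
    simp [this]
  · left
    have : E = Icc 1 f := by
      refine Subset.antisymm (fun j hj => ⟨(h₂ hj).1, ?_⟩) h₁
      rcases Nat.lt_or_eq_of_le (h₂ hj).2 with hlt | rfl
      exacts [by omega, absurd hj hf]
    simp [this]

theorem stmt13_general (S : Set Pt) (hfin : S.Finite)
    (f : ℕ) (hf : (∃ p ∈ S, delaunayDepth S p = f) ∧ ∀ p ∈ S, delaunayDepth S p ≤ f)
    (L : ℕ) (hL : L = {j : ℕ | ∃ x : Pt, relDepth S x = j}.ncard) :
    L = f ∨ L = f + 1 := by
  obtain ⟨⟨p, hp, rfl⟩, hmax⟩ := hf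
  subst hL
  apply ncard_eq_or_eq_add_one_of_Icc_subset
  · rintro j ⟨hj₁, hj⟩
    obtain ⟨v, hv, rfl⟩ := exists_delaunayDepth_eq_of_le hfin hp hj₁ hj
    exact ⟨v, relDepth_eq_delaunayDepth hv⟩
  · rintro j ⟨x, rfl⟩
    obtain ⟨q, hq, hxq⟩ := exists_relDepth_le_delaunayDepth_add_one hfin ⟨p, hp⟩ x
    exact ⟨one_le_delaunayDepth x, hxq.trans (Nat.add_le_add_right (hmax q hq) 1)⟩

/-- The number of nonempty Delaunay levels equals the maximum depth `f` of
the set, or `f + 1`. -/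
theorem stmt13 (S : Set Pt) (hfin : S.Finite) (hne : S.Nonempty) (hgp : GenPos S)
    (f : ℕ) (hf : (∃ p ∈ S, delaunayDepth S p = f) ∧ ∀ p ∈ S, delaunayDepth S p ≤ f)
    (L : ℕ) (hL : L = {j : ℕ | ∃ x : Pt, relDepth S x = j}.ncard) :
    L = f ∨ L = f + 1 :=
  stmt13_general S hfin f hf L hL
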